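/- arXiv:2002.11199 — 7 statements merged into one kernel-verified Lean document; each statement's English description precedes it below -/
import Mathlib

section
/- Let (X,f) be a dynamical system on a compact metric space. If f has shadowing, then f has two-sided shadowing: for every ε>0 there exists δ>0 such that every two-sided δ-pseudo-orbit (x_i)_{i∈ℤ} is ε-shadowed by some two-sided orbit (z_i)_{i∈ℤ} of a point z_0∈X. -/
open Filter Topology Function

variable {X : Type*} [MetricSpace X]

/-- A (forward) `δ`-pseudo-orbit. -/
def PseudoOrbit (f : X → X) (δ : ℝ) (x : ℕ → X) : Prop :=
  ∀ i, dist (f (x i)) (x (i + 1)) < δ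

/-- The orbit of `z` `ε`-shadows the sequence `x`. -/
def ShadowsFrom (f : X → X) (ε : ℝ) (z : X) (x : ℕ → X) : Prop :=
  ∀ i, dist (f^[i] z) (x i) < ε

/-- Classical shadowing. -/
def HasShadowing (f : X → X) : Prop :=
  ∀ ε > 0, ∃ δ > 0, ∀ x : ℕ → X, PseudoOrbit f δ x → ∃ z, ShadowsFrom f ε z x

/-- A full (two-sided) orbit. -/
def FullOrbit (f : X → X) (z : ℤ → X) : Prop := ∀ i : ℤ, f (z i) = z (i + 1)

/-- A two-sided `δ`-pseudo-orbit. -/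
def TwoSidedPseudoOrbit (f : X → X) (δ : ℝ) (x : ℤ → X) : Prop :=
  ∀ i : ℤ, dist (f (x i)) (x (i + 1)) < δ

/-- Two-sided shadowing. -/
def HasTwoSidedShadowing (f : X → X) : Prop :=
  ∀ ε > 0, ∃ δ > 0, ∀ x : ℤ → X, TwoSidedPseudoOrbit f δ x →
    ∃ z : ℤ → X, FullOrbit f z ∧ ∀ i, dist (z i) (x i) < ε

/-- A backwards `δ`-pseudo-orbit (indexed by nonpositive integers). -/
def BackwardPseudoOrbit (f : X → X) (δ : ℝ) (x : ℤ → X) : Prop :=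
  ∀ i < (0 : ℤ), dist (f (x i)) (x (i + 1)) < δ

/-- A backwards orbit. -/
def BackwardOrbit (f : X → X) (z : ℤ → X) : Prop := ∀ i < (0 : ℤ), f (z i) = z (i + 1)

/-- Backwards shadowing. -/
def HasBackwardShadowing (f : X → X) : Prop :=
  ∀ ε > 0, ∃ δ > 0, ∀ x : ℤ → X, BackwardPseudoOrbit f δ x →
    ∃ z : ℤ → X, BackwardOrbit f z ∧ ∀ i ≤ (0 : ℤ), dist (z i) (x i) < ε

/-- An asymptotic pseudo-orbit. -/
def AsymptoticPseudoOrbit (f : X → X) (x : ℕ → X) : Prop :=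
  Tendsto (fun i => dist (f (x i)) (x (i + 1))) atTop (nhds 0)

/-- s-limit shadowing. -/
def HasSLimitShadowing (f : X → X) : Prop :=
  HasShadowing f ∧ ∀ ε > 0, ∃ δ > 0, ∀ x : ℕ → X,
    PseudoOrbit f δ x → AsymptoticPseudoOrbit f x →
    ∃ z, ShadowsFrom f ε z x ∧ Tendsto (fun i => dist (f^[i] z) (x i)) atTop (nhds 0)

/-- Two-sided asymptotic pseudo-orbit condition. -/
def TwoSidedAsymptotic (f : X → X) (x : ℤ → X) : Prop :=
  Tendsto (fun i => dist (f (x i)) (x (i + 1))) atTop (nhds 0) ∧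
  Tendsto (fun i => dist (f (x i)) (x (i + 1))) atBot (nhds 0)

/-- The L-shadowing condition: two-sided asymptotic pseudo-orbits are
asymptotically shadowed by full orbits. -/
def HasLShadowing (f : X → X) : Prop :=
  ∀ ε > 0, ∃ δ > 0, ∀ x : ℤ → X,
    TwoSidedPseudoOrbit f δ x → TwoSidedAsymptotic f x →
    ∃ z : ℤ → X, FullOrbit f z ∧ (∀ i, dist (z i) (x i) < ε) ∧
      Tendsto (fun i => dist (z i) (x i)) atTop (nhds 0) ∧
      Tendsto (fun i => dist (z i) (x i)) atBot (nhds 0)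

/-- Two-sided s-limit shadowing. -/
def HasTwoSidedSLimitShadowing (f : X → X) : Prop :=
  HasTwoSidedShadowing f ∧ HasLShadowing f

/-- Backwards asymptotic pseudo-orbit condition. -/
def BackwardAsymptotic (f : X → X) (x : ℤ → X) : Prop :=
  Tendsto (fun i => dist (f (x i)) (x (i + 1))) atBot (nhds 0)

/-- Backwards s-limit shadowing. -/
def HasBackwardSLimitShadowing (f : X → X) : Prop :=
  HasBackwardShadowing f ∧ ∀ ε > 0, ∃ δ > 0, ∀ x : ℤ → X,
    BackwardPseudoOrbit f δ x → BackwardAsymptotic f x →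
    ∃ z : ℤ → X, BackwardOrbit f z ∧ (∀ i ≤ (0 : ℤ), dist (z i) (x i) < ε) ∧
      Tendsto (fun i => dist (z i) (x i)) atBot (nhds 0)

/-- A set has at most `n` points. -/
def AtMostCard (S : Set X) (n : ℕ) : Prop := ∃ F : Finset X, F.card ≤ n ∧ S ⊆ ↑F

/-- Positively `n`-expansive. -/
def PosNExpansive (f : X → X) (n : ℕ) : Prop :=
  ∃ r > 0, ∀ x : X, AtMostCard {y | ∀ k : ℕ, dist (f^[k] x) (f^[k] y) < r} n

/-- `n`-expansive (two-sided). -/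
def NExpansive (f : X → X) (n : ℕ) : Prop :=
  ∃ r > 0, ∀ x : ℤ → X, FullOrbit f x →
    AtMostCard {y0 | ∃ y : ℤ → X, FullOrbit f y ∧ y 0 = y0 ∧ ∀ i, dist (x i) (y i) < r} n

/-- `n`-shadowing. -/
def HasNShadowing (f : X → X) (n : ℕ) : Prop :=
  ∃ η > 0, ∀ ε, 0 < ε → ε < η → ∃ δ > 0, ∀ x : ℕ → X, PseudoOrbit f δ x →
    (∃ z, ShadowsFrom f ε z x) ∧ AtMostCard {z | ShadowsFrom f ε z x} n

/-- Two-sided `n`-shadowing. -/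
def HasTwoSidedNShadowing (f : X → X) (n : ℕ) : Prop :=
  ∃ η > 0, ∀ ε, 0 < ε → ε < η → ∃ δ > 0, ∀ x : ℤ → X, TwoSidedPseudoOrbit f δ x →
    (∃ z : ℤ → X, FullOrbit f z ∧ ∀ i, dist (z i) (x i) < ε) ∧
    AtMostCard {z0 | ∃ z : ℤ → X, FullOrbit f z ∧ z 0 = z0 ∧ ∀ i, dist (z i) (x i) < ε} n

/-- h-shadowing. -/
def HasHShadowing (f : X → X) : Prop :=
  ∀ ε > 0, ∃ δ > 0, ∀ (m : ℕ) (x : ℕ → X),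
    (∀ i < m, dist (f (x i)) (x (i + 1)) < δ) →
    ∃ z, (∀ i ≤ m, dist (f^[i] z) (x i) < ε) ∧ f^[m] z = x m

/-- Unique shadowing (`1`-shadowing). -/
def HasUniqueShadowing (f : X → X) : Prop :=
  ∃ η > 0, ∀ ε, 0 < ε → ε < η → ∃ δ > 0, ∀ x : ℕ → X, PseudoOrbit f δ x →
    ∃! z, ShadowsFrom f ε z x

/-- Unique s-limit shadowing. -/
def HasUniqueSLimitShadowing (f : X → X) : Prop :=
  HasUniqueShadowing f ∧ ∃ η > 0, ∀ ε, 0 < ε → ε < η → ∃ δ > 0, ∀ x : ℕ → X,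
    PseudoOrbit f δ x → AsymptoticPseudoOrbit f x →
    ∃! z, ShadowsFrom f ε z x ∧ Tendsto (fun i => dist (f^[i] z) (x i)) atTop (nhds 0)

/-- Unique h-shadowing. -/
def HasUniqueHShadowing (f : X → X) : Prop :=
  ∃ η > 0, ∀ ε, 0 < ε → ε < η → ∃ δ > 0, ∀ (m : ℕ) (x : ℕ → X),
    (∀ i < m, dist (f (x i)) (x (i + 1)) < δ) →
    ∃! z, (∀ i ≤ m, dist (f^[i] z) (x i) < ε) ∧ f^[m] z = x m

/-- Limit shadowing. -/
def HasLimitShadowing (f : X → X) : Prop :=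
  ∀ x : ℕ → X, AsymptoticPseudoOrbit f x →
    ∃ z, Tendsto (fun i => dist (f^[i] z) (x i)) atTop (nhds 0)

/-- Unique limit shadowing. -/
def HasUniqueLimitShadowing (f : X → X) : Prop :=
  ∀ x : ℕ → X, AsymptoticPseudoOrbit f x →
    ∃! z, Tendsto (fun i => dist (f^[i] z) (x i)) atTop (nhds 0)

/-- c-expansivity. -/
def CExpansive (f : X → X) : Prop :=
  ∃ η > 0, ∀ x y : ℤ → X, FullOrbit f x → FullOrbit f y →
    (∀ i, dist (x i) (y i) < η) → x 0 = y 0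

/-- Positive expansivity. -/
def PosExpansive (f : X → X) : Prop :=
  ∃ r > 0, ∀ x : X, {y | ∀ k : ℕ, dist (f^[k] x) (f^[k] y) < r} = {x}

/-- Topological mixing. -/
def Mixing (f : X → X) : Prop :=
  ∀ U V : Set X, IsOpen U → IsOpen V → U.Nonempty → V.Nonempty →
    ∃ N, ∀ n ≥ N, (f^[n] '' U ∩ V).Nonempty


/-!
Shadowing the forward pseudo-orbits `k ↦ x (k - n)` gives, for every `n`, a sequence that is a
genuine orbit from index `-n` on and stays `ε/2`-close to `x` there. These sequences form a
decreasing family of nonempty closed subsets of the compact space `ℤ → X`; a point of their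
intersection is a full orbit `ε/2`-close to `x` everywhere.
-/

def shadowingOrbitsFrom (f : X → X) (ε : ℝ) (x : ℤ → X) (n : ℕ) : Set (ℤ → X) :=
  {z | ∀ i : ℤ, -(n : ℤ) ≤ i → f (z i) = z (i + 1) ∧ dist (z i) (x i) ≤ ε}

section shadowingOrbitsFrom

variable {f : X → X} {ε : ℝ} {x : ℤ → X}

theorem shadowingOrbitsFrom_succ_subset (n : ℕ) :
    shadowingOrbitsFrom f ε x (n + 1) ⊆ shadowingOrbitsFrom f ε x n :=
  fun _ hz i hi => hz i (by omega)

theorem isClosed_shadowingOrbitsFrom (hf : Continuous f) (n : ℕ) :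
    IsClosed (shadowingOrbitsFrom f ε x n) := by
  have : shadowingOrbitsFrom f ε x n = ⋂ i ∈ {i : ℤ | -(n : ℤ) ≤ i},
      ({z | f (z i) = z (i + 1)} ∩ {z | dist (z i) (x i) ≤ ε}) := by
    ext z
    simp [shadowingOrbitsFrom]
  rw [this]
  refine isClosed_biInter fun i _ => .inter ?_ ?_
  · exact isClosed_eq (hf.comp (continuous_apply i)) (continuous_apply _)
  · exact isClosed_le ((continuous_apply i).dist continuous_const) continuous_const

theorem mem_iInter_shadowingOrbitsFrom {z : ℤ → X} :
    z ∈ ⋂ n, shadowingOrbitsFrom f ε x n ↔ FullOrbit f z ∧ ∀ i, dist (z i) (x i) ≤ ε := by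
  refine ⟨fun hz => ?_, fun ⟨hzf, hzx⟩ => Set.mem_iInter.mpr fun _ i _ => ⟨hzf i, hzx i⟩⟩
  have hzi : ∀ i, f (z i) = z (i + 1) ∧ dist (z i) (x i) ≤ ε := fun i =>
    Set.mem_iInter.mp hz i.natAbs i (by omega)
  exact ⟨fun i => (hzi i).1, fun i => (hzi i).2⟩

theorem ShadowsFrom.mem_shadowingOrbitsFrom {z : X} {n : ℕ}
    (hz : ShadowsFrom f ε z fun k : ℕ => x (k - n)) :
    (fun i : ℤ => f^[(i + n).toNat] z) ∈ shadowingOrbitsFrom f ε x n := by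
  intro i hi
  refine ⟨?_, ?_⟩
  · rw [← iterate_succ_apply' f]
    congr 1
    omega
  · simpa [Int.toNat_of_nonneg (show 0 ≤ i + n by omega)] using (hz (i + n).toNat).le

end shadowingOrbitsFrom

theorem TwoSidedPseudoOrbit.shift {f : X → X} {δ : ℝ} {x : ℤ → X}
    (hx : TwoSidedPseudoOrbit f δ x) (n : ℕ) : PseudoOrbit f δ fun k : ℕ => x (k - n) := by
  intro k
  simpa [sub_add_eq_add_sub] using hx (k - n)

theorem shadowing_implies_twoSidedShadowing
    {X : Type*} [MetricSpace X] [CompactSpace X] (f : X → X) (hf : Continuous f)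
    (h : HasShadowing f) : HasTwoSidedShadowing f := by
  intro ε hε
  obtain ⟨δ, hδ, hsh⟩ := h (ε / 2) (half_pos hε)
  refine ⟨δ, hδ, fun x hx => ?_⟩
  have hne (n : ℕ) : (shadowingOrbitsFrom f (ε / 2) x n).Nonempty := by
    obtain ⟨z, hz⟩ := hsh _ (hx.shift n)
    exact ⟨_, hz.mem_shadowingOrbitsFrom⟩
  obtain ⟨z, hz⟩ := IsCompact.nonempty_iInter_of_sequence_nonempty_isCompact_isClosed _
    shadowingOrbitsFrom_succ_subset hne (isClosed_shadowingOrbitsFrom hf 0).isCompact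
    (isClosed_shadowingOrbitsFrom hf)
  obtain ⟨hzf, hzx⟩ := mem_iInter_shadowingOrbitsFrom.mp hz
  exact ⟨z, hzf, fun i => (hzx i).trans_lt (half_lt_self hε)⟩
end

section
/- Let (X,f) be a dynamical system on a compact metric space with f surjective. If f has backwards shadowing, then f has shadowing. -/
open Filter Topology Function

variable {X : Type*} [MetricSpace X]

/-!
Prepending to a finite `δ`-pseudo-orbit segment `x 0, …, x N` a chain of exact preimages of
`x 0`, which exists since `f` is onto, gives a backward `δ`-pseudo-orbit. Backwards shadowing
therefore shadows every finite segment of a forward pseudo-orbit, by the point of the shadowing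
backward orbit at the time where the segment starts. By compactness and continuity of `f`, a limit
point of these shadowing points shadows the whole forward pseudo-orbit.
-/

def backwardExtension {α : Type*} (g : α → α) (N : ℕ) (x : ℕ → α) (i : ℤ) : α :=
  if -(N : ℤ) ≤ i then x (i + N).toNat else g^[(-(i + N)).toNat] (x 0)

theorem backwardExtension_neg_add {α : Type*} (g : α → α) (N k : ℕ) (x : ℕ → α) :
    backwardExtension g N x (-N + k) = x k := by
  have hle : -(N : ℤ) ≤ -N + k := by omega
  have hidx : (-(N : ℤ) + k + N).toNat = k := by omega
  rw [backwardExtension, if_pos hle, hidx]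

theorem backwardPseudoOrbit_backwardExtension {f g : X → X} (hfg : RightInverse g f) {δ : ℝ}
    (hδ : 0 < δ) {N : ℕ} {x : ℕ → X} (hx : ∀ i < N, dist (f (x i)) (x (i + 1)) < δ) :
    BackwardPseudoOrbit f δ (backwardExtension g N x) := by
  intro i hi
  simp only [backwardExtension]
  by_cases hiN : -(N : ℤ) ≤ i
  · have hidx : (i + 1 + N).toNat = (i + N).toNat + 1 := by omega
    rw [if_pos hiN, if_pos (by omega), hidx]
    exact hx _ (by omega)
  · rw [if_neg hiN]
    by_cases hi1 : -(N : ℤ) ≤ i + 1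
    · have hidx : (-(i + N)).toNat = 1 := by omega
      have hidx' : (i + 1 + N).toNat = 0 := by omega
      rw [if_pos hi1, hidx, hidx', iterate_one, hfg, dist_self]
      exact hδ
    · have hidx : (-(i + N)).toNat = (-(i + 1 + N)).toNat + 1 := by omega
      rw [if_neg hi1, hidx, iterate_succ_apply', hfg, dist_self]
      exact hδ

theorem BackwardOrbit.iterate_apply {α : Type*} {f : α → α} {z : ℤ → α}
    (hz : BackwardOrbit f z) (k : ℕ) {i : ℤ} (hik : i + k ≤ 0) : f^[k] (z i) = z (i + k) := by
  induction k generalizing i with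
  | zero => simp
  | succ k ih =>
    rw [iterate_succ_apply, hz i (by omega), ih (by omega)]
    congr 1
    push_cast
    ring

theorem exists_dist_iterate_lt_of_backwardShadowing {f : X → X} (hsurj : Surjective f)
    {ε δ : ℝ} (hδ : 0 < δ)
    (hB : ∀ x : ℤ → X, BackwardPseudoOrbit f δ x →
      ∃ z : ℤ → X, BackwardOrbit f z ∧ ∀ i ≤ (0 : ℤ), dist (z i) (x i) < ε)
    {N : ℕ} {x : ℕ → X} (hx : ∀ i < N, dist (f (x i)) (x (i + 1)) < δ) :
    ∃ w, ∀ k ≤ N, dist (f^[k] w) (x k) < ε := by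
  obtain ⟨z, hz, hzx⟩ :=
    hB _ (backwardPseudoOrbit_backwardExtension (rightInverse_surjInv hsurj) hδ hx)
  refine ⟨z (-N), fun k hk => ?_⟩
  rw [hz.iterate_apply k (by omega), ← backwardExtension_neg_add (surjInv hsurj) N k x]
  exact hzx _ (by omega)

theorem exists_forall_dist_iterate_le_of_forall_finite [CompactSpace X] {f : X → X}
    (hf : Continuous f) {ε : ℝ} {x : ℕ → X}
    (hseg : ∀ N : ℕ, ∃ w, ∀ k ≤ N, dist (f^[k] w) (x k) ≤ ε) :
    ∃ z, ∀ k, dist (f^[k] z) (x k) ≤ ε := by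
  choose w hw using hseg
  obtain ⟨z, -, φ, hφ, hwz⟩ := isCompact_univ.tendsto_subseq fun n => Set.mem_univ (w n)
  refine ⟨z, fun k => le_of_tendsto ((((hf.iterate k).tendsto z).comp hwz).dist
    tendsto_const_nhds) ?_⟩
  filter_upwards [eventually_ge_atTop k] with j hj
  exact hw (φ j) k (hj.trans hφ.le_apply)

theorem backwardShadowing_implies_shadowing
    {X : Type*} [MetricSpace X] [CompactSpace X] (f : X → X) (hf : Continuous f)
    (hsurj : Function.Surjective f) (h : HasBackwardShadowing f) : HasShadowing f := by
  intro ε hε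
  obtain ⟨δ, hδ, hB⟩ := h (ε / 2) (half_pos hε)
  refine ⟨δ, hδ, fun x hx => ?_⟩
  have segments : ∀ N : ℕ, ∃ w, ∀ k ≤ N, dist (f^[k] w) (x k) ≤ ε / 2 := fun N =>
    (exists_dist_iterate_lt_of_backwardShadowing hsurj hδ hB fun i _ => hx i).imp
      fun _ hw k hk => (hw k hk).le
  obtain ⟨z, hz⟩ := exists_forall_dist_iterate_le_of_forall_finite hf segments
  exact ⟨z, fun k => (hz k).trans_lt (half_lt_self hε)⟩
end

section
/- If a dynamical system (X,f) on a compact metric space has two-sided s-limit shadowing, then it has backwards s-limit shadowing. -/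
open Filter Topology Function

variable {X : Type*} [MetricSpace X]

/-!
A backwards pseudo-orbit `(x_i)_{i ≤ 0}` becomes a two-sided one, with the same errors and the same
asymptotics at `-∞`, once it is continued for `i > 0` by the true orbit of `x_0`. Shadowing this
extension with the two-sided property and forgetting the positive times gives the backwards
shadowing orbit.
-/

def extendByOrbit {α : Type*} (f : α → α) (x : ℤ → α) : ℤ → α :=
  fun i => if i ≤ 0 then x i else f^[i.toNat] (x 0)

section

variable {α : Type*} (f : α → α) (x : ℤ → α)

lemma extendByOrbit_of_nonpos {i : ℤ} (hi : i ≤ 0) : extendByOrbit f x i = x i :=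
  if_pos hi

lemma extendByOrbit_of_nonneg {i : ℤ} (hi : 0 ≤ i) :
    extendByOrbit f x i = f^[i.toNat] (x 0) := by
  rcases hi.eq_or_lt with rfl | hpos
  · simp [extendByOrbit]
  · exact if_neg hpos.not_ge

lemma extendByOrbit_succ_of_nonneg {i : ℤ} (hi : 0 ≤ i) :
    f (extendByOrbit f x i) = extendByOrbit f x (i + 1) := by
  rw [extendByOrbit_of_nonneg f x hi, extendByOrbit_of_nonneg f x (by omega),
    show (i + 1).toNat = i.toNat + 1 by omega, iterate_succ_apply']

lemma extendByOrbit_eventuallyEq_atBot : extendByOrbit f x =ᶠ[atBot] x := by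
  filter_upwards [eventually_le_atBot 0] with i hi
  exact extendByOrbit_of_nonpos f x hi

lemma FullOrbit.backwardOrbit {z : ℤ → α} (hz : FullOrbit f z) : BackwardOrbit f z :=
  fun i _ => hz i

end

section

variable {α : Type*} [MetricSpace α] {f : α → α} {x : ℤ → α}

lemma BackwardPseudoOrbit.twoSidedPseudoOrbit_extendByOrbit {δ : ℝ} (hδ : 0 < δ)
    (hx : BackwardPseudoOrbit f δ x) : TwoSidedPseudoOrbit f δ (extendByOrbit f x) := by
  intro i
  rcases lt_or_ge i 0 with hneg | hnonneg
  · rw [extendByOrbit_of_nonpos f x hneg.le, extendByOrbit_of_nonpos f x (by omega)]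
    exact hx i hneg
  · rwa [extendByOrbit_succ_of_nonneg f x hnonneg, dist_self]

lemma BackwardAsymptotic.twoSidedAsymptotic_extendByOrbit (hx : BackwardAsymptotic f x) :
    TwoSidedAsymptotic f (extendByOrbit f x) := by
  constructor
  · refine tendsto_const_nhds.congr' ?_
    filter_upwards [eventually_ge_atTop 0] with i hi
    rw [extendByOrbit_succ_of_nonneg f x hi, dist_self]
  · refine hx.congr' ?_
    filter_upwards [eventually_le_atBot (-1)] with i hi
    rw [extendByOrbit_of_nonpos f x (by omega), extendByOrbit_of_nonpos f x (by omega)]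

lemma HasTwoSidedShadowing.hasBackwardShadowing (h : HasTwoSidedShadowing f) :
    HasBackwardShadowing f := by
  intro ε hε
  obtain ⟨δ, hδ, hshadow⟩ := h ε hε
  refine ⟨δ, hδ, fun x hx => ?_⟩
  obtain ⟨z, hz, hzx⟩ := hshadow _ (hx.twoSidedPseudoOrbit_extendByOrbit hδ)
  refine ⟨z, hz.backwardOrbit, fun i hi => ?_⟩
  simpa only [extendByOrbit_of_nonpos f x hi] using hzx i

lemma HasLShadowing.backward (h : HasLShadowing f) :
    ∀ ε > 0, ∃ δ > 0, ∀ x : ℤ → α,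
      BackwardPseudoOrbit f δ x → BackwardAsymptotic f x →
      ∃ z : ℤ → α, BackwardOrbit f z ∧ (∀ i ≤ (0 : ℤ), dist (z i) (x i) < ε) ∧
        Tendsto (fun i => dist (z i) (x i)) atBot (𝓝 0) := by
  intro ε hε
  obtain ⟨δ, hδ, hshadow⟩ := h ε hε
  refine ⟨δ, hδ, fun x hx hasym => ?_⟩
  obtain ⟨z, hz, hzx, -, hbot⟩ := hshadow _ (hx.twoSidedPseudoOrbit_extendByOrbit hδ)
    hasym.twoSidedAsymptotic_extendByOrbit
  refine ⟨z, hz.backwardOrbit, fun i hi => ?_, hbot.congr' ?_⟩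
  · simpa only [extendByOrbit_of_nonpos f x hi] using hzx i
  · filter_upwards [extendByOrbit_eventuallyEq_atBot f x] with i hi
    rw [hi]

end

theorem twoSidedSLimit_implies_backwardSLimit_general
    {X : Type*} [MetricSpace X] (f : X → X)
    (h : HasTwoSidedSLimitShadowing f) : HasBackwardSLimitShadowing f :=
  ⟨h.1.hasBackwardShadowing, h.2.backward⟩

theorem twoSidedSLimit_implies_backwardSLimit
    {X : Type*} [MetricSpace X] [CompactSpace X] (f : X → X) (hf : Continuous f)
    (h : HasTwoSidedSLimitShadowing f) : HasBackwardSLimitShadowing f :=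
  twoSidedSLimit_implies_backwardSLimit_general f h
end

section
/- If (X,f) is a dynamical system on a compact metric space with f surjective and f has two-sided s-limit shadowing, then f has s-limit shadowing. -/
open Filter Topology Function

variable {X : Type*} [MetricSpace X]

/-! Surjectivity lets one continue a forward pseudo-orbit into the past along a chosen right
inverse of `f`; the past part is then an exact orbit, so the extension is a two-sided
(asymptotic) pseudo-orbit with the same constants. A full orbit shadowing it yields, at time `0`,
a point whose forward orbit shadows the original sequence. -/

def extendBackward {α : Type*} (g : α → α) (x : ℕ → α) : ℤ → α
  | (n : ℕ) => x n
  | Int.negSucc n => g^[n + 1] (x 0)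

section extendBackward

variable {α : Type*} {f g : α → α} {x : ℕ → α}

@[simp]
theorem extendBackward_natCast (g : α → α) (x : ℕ → α) (n : ℕ) :
    extendBackward g x n = x n :=
  rfl

theorem map_extendBackward_of_neg (hg : RightInverse g f) {i : ℤ} (hi : i < 0) :
    f (extendBackward g x i) = extendBackward g x (i + 1) := by
  obtain ⟨n, rfl⟩ := Int.eq_negSucc_of_lt_zero hi
  rcases n with _ | n
  · exact hg (x 0)
  · rw [show Int.negSucc (n + 1) + 1 = Int.negSucc n by omega]
    exact (congrArg f (iterate_succ_apply' g (n + 1) (x 0))).trans (hg _)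

theorem FullOrbit.apply_natCast {z : ℤ → α} (hz : FullOrbit f z) (n : ℕ) :
    z n = f^[n] (z 0) := by
  induction n with
  | zero => rfl
  | succ n ih => rw [Nat.cast_succ, ← hz, ih, iterate_succ_apply']

end extendBackward

section Shadowing

variable {f g : X → X} {x : ℕ → X}

theorem PseudoOrbit.twoSidedPseudoOrbit_extendBackward {δ : ℝ} (hg : RightInverse g f)
    (hδ : 0 < δ) (hx : PseudoOrbit f δ x) : TwoSidedPseudoOrbit f δ (extendBackward g x) := by
  rintro (n | n)
  · exact hx n
  · rw [map_extendBackward_of_neg hg (Int.negSucc_lt_zero n), dist_self]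
    exact hδ

theorem AsymptoticPseudoOrbit.twoSidedAsymptotic_extendBackward (hg : RightInverse g f)
    (hx : AsymptoticPseudoOrbit f x) : TwoSidedAsymptotic f (extendBackward g x) := by
  constructor
  · have hToNat : Tendsto Int.toNat atTop atTop :=
      tendsto_atTop_atTop.2 fun n => ⟨n, fun i hi => by omega⟩
    refine (hx.comp hToNat).congr' ?_
    filter_upwards [eventually_ge_atTop 0] with i hi
    lift i to ℕ using hi
    rfl
  · refine tendsto_const_nhds.congr' ?_
    filter_upwards [eventually_lt_atBot 0] with i hi
    rw [map_extendBackward_of_neg hg hi, dist_self]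

theorem shadowsFrom_of_fullOrbit {ε : ℝ} {z y : ℤ → X} (hz : FullOrbit f z)
    (hzy : ∀ i, dist (z i) (y i) < ε) (hyx : ∀ n : ℕ, y n = x n) :
    ShadowsFrom f ε (z 0) x := fun n => by
  simpa only [← hz.apply_natCast, hyx] using hzy n

theorem HasTwoSidedShadowing.hasShadowing (hsurj : Surjective f)
    (h : HasTwoSidedShadowing f) : HasShadowing f := by
  intro ε hε
  obtain ⟨δ, hδ, hshadow⟩ := h ε hε
  refine ⟨δ, hδ, fun x hx => ?_⟩
  obtain ⟨z, hz, hzx⟩ :=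
    hshadow _ (hx.twoSidedPseudoOrbit_extendBackward (rightInverse_surjInv hsurj) hδ)
  exact ⟨z 0, shadowsFrom_of_fullOrbit hz hzx fun _ => rfl⟩

theorem HasLShadowing.asymptotic_shadowing (hsurj : Surjective f)
    (h : HasLShadowing f) :
    ∀ ε > 0, ∃ δ > 0, ∀ x : ℕ → X, PseudoOrbit f δ x → AsymptoticPseudoOrbit f x →
      ∃ z, ShadowsFrom f ε z x ∧ Tendsto (fun i => dist (f^[i] z) (x i)) atTop (𝓝 0) := by
  intro ε hε
  obtain ⟨δ, hδ, hshadow⟩ := h ε hε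
  refine ⟨δ, hδ, fun x hx hasymp => ?_⟩
  have hg := rightInverse_surjInv hsurj
  obtain ⟨z, hz, hzx, hlim, -⟩ := hshadow _ (hx.twoSidedPseudoOrbit_extendBackward hg hδ)
    (hasymp.twoSidedAsymptotic_extendBackward hg)
  refine ⟨z 0, shadowsFrom_of_fullOrbit hz hzx fun _ => rfl, ?_⟩
  refine (hlim.comp tendsto_natCast_atTop_atTop).congr fun n => ?_
  simp only [comp_apply, hz.apply_natCast, extendBackward_natCast]

end Shadowing

theorem twoSidedSLimit_implies_sLimit_general
    {X : Type*} [MetricSpace X] (f : X → X)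
    (hsurj : Function.Surjective f) (h : HasTwoSidedSLimitShadowing f) :
    HasSLimitShadowing f :=
  ⟨h.1.hasShadowing hsurj, h.2.asymptotic_shadowing hsurj⟩

theorem twoSidedSLimit_implies_sLimit
    {X : Type*} [MetricSpace X] [CompactSpace X] (f : X → X) (hf : Continuous f)
    (hsurj : Function.Surjective f) (h : HasTwoSidedSLimitShadowing f) :
    HasSLimitShadowing f :=
  twoSidedSLimit_implies_sLimit_general f hsurj h
end

section
/- Let (X,f) be a dynamical system on a compact metric space. If f is c-expansive, then f has two-sided shadowing if and only if f has two-sided s-limit shadowing. -/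
open Filter Topology Function

variable {X : Type*} [MetricSpace X]

/-! Only the asymptotic part of two-sided s-limit shadowing needs proof, and it holds for every
shadowing orbit `z` of a two-sided asymptotic pseudo-orbit `x`, once `z` stays `ε'`-close to `x`
with `ε'` below the expansivity constant. If `d(z i, x i)` did not tend to `0` at `±∞`,
compactness would give limits of the shifted pairs `(z (i + ·), x (i + ·))` along bad indices;
both limits are full orbits (the errors of `x` vanish at `±∞`) that stay `ε'`-close, so
c-expansivity makes them agree at `0`. -/

lemma fullOrbit_of_tendsto {ι : Type*} {l : Filter ι} [l.NeBot] {f : X → X} (hf : Continuous f)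
    {x : ι → ℤ → X} {p : ℤ → X} (hx : Tendsto x l (𝓝 p))
    (herr : ∀ j, Tendsto (fun n => dist (f (x n j)) (x n (j + 1))) l (𝓝 0)) :
    FullOrbit f p := fun j =>
  tendsto_nhds_unique ((hf.tendsto _).comp (tendsto_pi_nhds.mp hx j))
    ((tendsto_pi_nhds.mp hx (j + 1)).congr_dist (by simpa [dist_comm] using herr j))

lemma tendsto_dist_apply_zero_of_cExpansive [CompactSpace X] {ι : Type*} {l : Filter ι}
    [l.IsCountablyGenerated] {f : X → X} (hf : Continuous f) {η ε' : ℝ}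
    (hexp : ∀ x y : ℤ → X, FullOrbit f x → FullOrbit f y →
      (∀ i, dist (x i) (y i) < η) → x 0 = y 0)
    (hε' : ε' < η) {z x : ι → ℤ → X} (hz : ∀ n, FullOrbit f (z n))
    (hd : ∀ n j, dist (z n j) (x n j) ≤ ε')
    (herr : ∀ j, Tendsto (fun n => dist (f (x n j)) (x n (j + 1))) l (𝓝 0)) :
    Tendsto (fun n => dist (z n 0) (x n 0)) l (𝓝 0) := by
  refine tendsto_of_subseq_tendsto fun ns hns => ?_
  obtain ⟨⟨P, Q⟩, -, ms, hms, hlim⟩ :=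
    isCompact_univ.tendsto_subseq (x := fun k => (z (ns k), x (ns k))) fun _ => Set.mem_univ _
  have hsub : Tendsto (fun k => ns (ms k)) atTop l := hns.comp hms.tendsto_atTop
  have hzP : Tendsto (fun k => z (ns (ms k))) atTop (𝓝 P) := hlim.fst_nhds
  have hxQ : Tendsto (fun k => x (ns (ms k))) atTop (𝓝 Q) := hlim.snd_nhds
  have hdist (j : ℤ) : Tendsto (fun k => dist (z (ns (ms k)) j) (x (ns (ms k)) j)) atTop
      (𝓝 (dist (P j) (Q j))) :=
    (tendsto_pi_nhds.mp hzP j).dist (tendsto_pi_nhds.mp hxQ j)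
  have hP : FullOrbit f P := fullOrbit_of_tendsto hf hzP fun j => by
    simp only [hz _ j, dist_self, tendsto_const_nhds]
  have hQ : FullOrbit f Q := fullOrbit_of_tendsto hf hxQ fun j => (herr j).comp hsub
  have hPQ : P 0 = Q 0 := hexp P Q hP hQ fun j =>
    (le_of_tendsto (hdist j) (Eventually.of_forall fun k => hd (ns (ms k)) j)).trans_lt hε'
  exact ⟨ms, by simpa only [hPQ, dist_self] using hdist 0⟩

lemma tendsto_dist_of_cExpansive_of_shadows [CompactSpace X] {l : Filter ℤ}
    [l.IsCountablyGenerated] (hl : ∀ j, Tendsto (· + j) l l) {f : X → X} (hf : Continuous f)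
    {η ε' : ℝ}
    (hexp : ∀ x y : ℤ → X, FullOrbit f x → FullOrbit f y →
      (∀ i, dist (x i) (y i) < η) → x 0 = y 0)
    (hε' : ε' < η) {z x : ℤ → X} (hz : FullOrbit f z) (hd : ∀ i, dist (z i) (x i) ≤ ε')
    (herr : Tendsto (fun i => dist (f (x i)) (x (i + 1))) l (𝓝 0)) :
    Tendsto (fun i => dist (z i) (x i)) l (𝓝 0) := by
  simpa only [add_zero] using tendsto_dist_apply_zero_of_cExpansive hf hexp hε'
    (z := fun i j => z (i + j)) (x := fun i j => x (i + j))
    (fun i j => by rw [hz, add_assoc]) (fun i j => hd (i + j))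
    (fun j => by simpa only [Function.comp_def, add_assoc] using herr.comp (hl j))

theorem cExpansive_twoSidedShadowing_iff_twoSidedSLimit
    {X : Type*} [MetricSpace X] [CompactSpace X] (f : X → X) (hf : Continuous f)
    (hexp : CExpansive f) :
    HasTwoSidedShadowing f ↔ HasTwoSidedSLimitShadowing f := by
  refine ⟨fun h => ⟨h, fun ε hε => ?_⟩, And.left⟩
  obtain ⟨η, hη, hexp⟩ := hexp
  obtain ⟨δ, hδ, hsh⟩ := h (min ε η / 2) (by positivity)
  have hε' : min ε η / 2 < min ε η := half_lt_self (lt_min hε hη)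
  have hε'η : min ε η / 2 < η := hε'.trans_le (min_le_right _ _)
  refine ⟨δ, hδ, fun x hpo ⟨htop, hbot⟩ => ?_⟩
  obtain ⟨z, hz, hzx⟩ := hsh x hpo
  have hd (i : ℤ) : dist (z i) (x i) ≤ min ε η / 2 := (hzx i).le
  refine ⟨z, hz, fun i => (hzx i).trans (hε'.trans_le (min_le_left _ _)), ?_, ?_⟩
  · exact tendsto_dist_of_cExpansive_of_shadows
      (fun j => tendsto_atTop_add_const_right _ j tendsto_id) hf hexp hε'η hz hd htop
  · exact tendsto_dist_of_cExpansive_of_shadows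
      (fun j => tendsto_atBot_add_const_right _ j tendsto_id) hf hexp hε'η hz hd hbot
end

section
/- Let (X,f) be a dynamical system on a metric space and n∈ℕ. Then f has n-shadowing if and only if f has shadowing and is positively n-expansive. -/
open Filter Topology Function

variable {X : Type*} [MetricSpace X]

/-!
Orbits are pseudo-orbits, and a point shadows the orbit of `x` exactly when its orbit stays
close to that of `x`; so `n`-shadowing at scale `η / 2` bounds `Γ₊(x, η / 2)` by `n` points.
Conversely, any two `ε`-shadows of one pseudo-orbit have orbits `2ε`-close, so with `2ε < r`
all shadows of a pseudo-orbit lie in the set `Γ₊(z, r)` of one of them, which has at most `n`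
points.
-/

section

variable {f : X → X} {n : ℕ}

theorem AtMostCard.mono {Y : Type*} {S T : Set Y} (hT : AtMostCard T n) (hST : S ⊆ T) :
    AtMostCard S n :=
  let ⟨F, hF, hTF⟩ := hT
  ⟨F, hF, hST.trans hTF⟩

theorem ShadowsFrom.mono {ε ε' : ℝ} {z : X} {x : ℕ → X} (h : ShadowsFrom f ε z x)
    (hε : ε ≤ ε') : ShadowsFrom f ε' z x :=
  fun i => (h i).trans_le hε

theorem ShadowsFrom.dist_iterate_lt {ε : ℝ} {z w : X} {x : ℕ → X} (hz : ShadowsFrom f ε z x)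
    (hw : ShadowsFrom f ε w x) (k : ℕ) : dist (f^[k] z) (f^[k] w) < 2 * ε :=
  calc dist (f^[k] z) (f^[k] w) ≤ dist (f^[k] z) (x k) + dist (f^[k] w) (x k) :=
        dist_triangle_right _ _ _
    _ < ε + ε := add_lt_add (hz k) (hw k)
    _ = 2 * ε := (two_mul ε).symm

theorem pseudoOrbit_iterate {δ : ℝ} (hδ : 0 < δ) (x : X) :
    PseudoOrbit f δ (fun i => f^[i] x) := fun i => by
  simpa only [← iterate_succ_apply' f i x, dist_self] using hδ

theorem shadowsFrom_iterate_iff {ε : ℝ} {x y : X} :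
    ShadowsFrom f ε y (fun i => f^[i] x) ↔ ∀ k, dist (f^[k] x) (f^[k] y) < ε := by
  simp only [ShadowsFrom, dist_comm]

theorem HasNShadowing.hasShadowing (h : HasNShadowing f n) : HasShadowing f := by
  obtain ⟨η, hη, H⟩ := h
  intro ε hε
  obtain ⟨δ, hδ, hshadow⟩ := H (min ε (η / 2)) (by positivity)
    ((min_le_right _ _).trans_lt (half_lt_self hη))
  exact ⟨δ, hδ, fun x hx => (hshadow x hx).1.imp fun z hz => hz.mono (min_le_left _ _)⟩

theorem HasNShadowing.posNExpansive (h : HasNShadowing f n) : PosNExpansive f n := by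
  obtain ⟨η, hη, H⟩ := h
  refine ⟨η / 2, half_pos hη, fun x => ?_⟩
  obtain ⟨δ, hδ, hshadow⟩ := H (η / 2) (half_pos hη) (half_lt_self hη)
  exact (hshadow _ (pseudoOrbit_iterate hδ x)).2.mono fun y hy => shadowsFrom_iterate_iff.2 hy

theorem HasShadowing.hasNShadowing (hS : HasShadowing f) (hE : PosNExpansive f n) :
    HasNShadowing f n := by
  obtain ⟨r, hr, hcard⟩ := hE
  refine ⟨r / 2, half_pos hr, fun ε hε hεr => ?_⟩
  obtain ⟨δ, hδ, hshadow⟩ := hS ε hε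
  refine ⟨δ, hδ, fun x hx => ?_⟩
  obtain ⟨z, hz⟩ := hshadow x hx
  refine ⟨⟨z, hz⟩, (hcard z).mono fun w hw k => ?_⟩
  calc dist (f^[k] z) (f^[k] w) < 2 * ε := hz.dist_iterate_lt hw k
    _ < r := by linarith

end

theorem nShadowing_iff_shadowing_and_posNExpansive_general
    {X : Type*} [MetricSpace X] (f : X → X) (n : ℕ) :
    HasNShadowing f n ↔ HasShadowing f ∧ PosNExpansive f n :=
  ⟨fun h => ⟨h.hasShadowing, h.posNExpansive⟩, fun ⟨hS, hE⟩ => hS.hasNShadowing hE⟩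

theorem nShadowing_iff_shadowing_and_posNExpansive
    {X : Type*} [MetricSpace X] (f : X → X) (hf : Continuous f) (n : ℕ) (hn : 1 ≤ n) :
    HasNShadowing f n ↔ HasShadowing f ∧ PosNExpansive f n :=
  nShadowing_iff_shadowing_and_posNExpansive_general f n
end

section
/- A positively n-expansive continuous map f on a compact metric space is finite-to-one: for every x∈X the preimage f⁻¹(x) is finite. -/
open Filter Topology Function

variable {X : Type*} [MetricSpace X]

/-!
Two points of the same fibre of `f` have the same forward orbit from time `1` on, so two fibre
points at distance `< r` lie in each other's dynamical `r`-ball. With `r` the expansivity constant,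
every `r`-ball centred in the fibre therefore meets it in finitely many points, and by total
boundedness finitely many such balls cover the fibre.
-/

/-- The set `Γ₊(z, r)` of the paper. -/
def dynamicalBall (f : X → X) (z : X) (r : ℝ) : Set X :=
  {y | ∀ k : ℕ, dist (f^[k] z) (f^[k] y) < r}

theorem AtMostCard.finite {α : Type*} {S : Set α} {n : ℕ} (h : AtMostCard S n) : S.Finite :=
  let ⟨F, _, hF⟩ := h
  F.finite_toSet.subset hF

theorem iterate_eq_of_apply_eq {α : Type*} {f : α → α} {y z : α} (h : f y = f z) :
    ∀ {k : ℕ}, 0 < k → f^[k] y = f^[k] z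
  | k + 1, _ => by rw [iterate_succ_apply, iterate_succ_apply, h]

theorem preimage_singleton_inter_ball_subset_dynamicalBall {f : X → X} {x z : X} {r : ℝ}
    (hr : 0 < r) (hz : f z = x) : f ⁻¹' {x} ∩ Metric.ball z r ⊆ dynamicalBall f z r := by
  rintro y ⟨hy, hyz⟩ (_ | k)
  · simpa [dist_comm] using hyz
  · rw [iterate_eq_of_apply_eq (hz.trans hy.symm) k.succ_pos, dist_self]
    exact hr

theorem TotallyBounded.finite_of_finite_inter_ball {S : Set X} (hS : TotallyBounded S) {r : ℝ}
    (hr : 0 < r) (h : ∀ z ∈ S, (S ∩ Metric.ball z r).Finite) : S.Finite := by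
  obtain ⟨t, htS, ht, hcover⟩ := Metric.finite_approx_of_totallyBounded hS r hr
  have hS_eq : S = ⋃ z ∈ t, S ∩ Metric.ball z r := by
    rw [← Set.inter_iUnion₂]
    exact (Set.inter_eq_left.mpr hcover).symm
  rw [hS_eq]
  exact ht.biUnion fun z hz => h z (htS hz)

theorem posNExpansive_finite_to_one_general
    {X : Type*} [MetricSpace X] [CompactSpace X] (f : X → X)
    (n : ℕ) (h : PosNExpansive f n) :
    ∀ x : X, (f ⁻¹' {x}).Finite := by
  intro x
  obtain ⟨r, hr, hexp⟩ := h
  refine (isCompact_univ.totallyBounded.subset (Set.subset_univ _)).finite_of_finite_inter_ball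
    hr fun z hz => ?_
  exact (hexp z).finite.subset (preimage_singleton_inter_ball_subset_dynamicalBall hr hz)

theorem posNExpansive_finite_to_one
    {X : Type*} [MetricSpace X] [CompactSpace X] (f : X → X) (hf : Continuous f)
    (n : ℕ) (hn : 1 ≤ n) (h : PosNExpansive f n) :
    ∀ x : X, (f ⁻¹' {x}).Finite :=
  posNExpansive_finite_to_one_general f n h
end
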